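/- arXiv:2004.09744 — 6 statements merged into one kernel-verified Lean document; each statement's English description precedes it below -/
import Mathlib

section
/- Let r, θ, ψ : ℝ → ℝ be differentiable functions with r(t) > 0 for all t, satisfying the polar kinematics relative to a stationary hazard: ṙ(t) = cos(ψ(t) − θ(t)), θ̇(t) = sin(ψ(t) − θ(t))/r(t), and ψ̇(t) = u(t), where u : ℝ → ℝ is the aircraft's turn-rate control. Then r is twice differentiable with r̈(t) = sin²(ψ(t) − θ(t))/r(t) − u(t)·sin(ψ(t) − θ(t)). Consequently, for every t with u(t) ∈ [−1, 1], r̈(t) ≤ sin²(ψ(t) − θ(t))/r(t) + |sin(ψ(t) − θ(t))|, and equality holds when u(t) = −sign(sin(ψ(t) − θ(t))). In other words, the bearing-only strategy u(t) = −sign(sin(ψ(t) − θ(t))) maximises the instantaneous range acceleration r̈(t) over all controls u(t) ∈ [−1, 1]. -/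
/-! Differentiating `ṙ = cos (ψ - θ)` along the kinematics gives
`r̈ = -sin (ψ - θ) · (u - sin (ψ - θ) / r)`, in which the control enters only through the
term `-u · sin (ψ - θ)`. Over `u ∈ [-1, 1]` this affine function of `u` is maximised at
`u = -sign (sin (ψ - θ))`, where it equals `|sin (ψ - θ)|`. -/

open Real

theorem Real.sign_mul_self (x : ℝ) : Real.sign x * x = |x| := by
  rcases lt_trichotomy x 0 with hx | rfl | hx
  · rw [Real.sign_of_neg hx, abs_of_neg hx, neg_one_mul]
  · rw [mul_zero, abs_zero]
  · rw [Real.sign_of_pos hx, abs_of_pos hx, one_mul]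

theorem neg_mul_le_abs_of_mem_Icc {u : ℝ} (hu : u ∈ Set.Icc (-1 : ℝ) 1) (x : ℝ) :
    -(u * x) ≤ |x| :=
  calc -(u * x) ≤ |u * x| := neg_le_abs _
    _ = |u| * |x| := abs_mul _ _
    _ ≤ 1 * |x| := mul_le_mul_of_nonneg_right (abs_le.mpr hu) (abs_nonneg _)
    _ = |x| := one_mul _

theorem neg_mul_eq_abs_of_eq_neg_sign {u x : ℝ} (hu : u = -Real.sign x) :
    -(u * x) = |x| := by
  rw [hu, neg_mul, neg_neg, Real.sign_mul_self]

theorem hasDerivAt_deriv_range_of_polar_kinematics {r θ ψ u : ℝ → ℝ}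
    (hdr : ∀ t, HasDerivAt r (cos (ψ t - θ t)) t)
    (hdθ : ∀ t, HasDerivAt θ (sin (ψ t - θ t) / r t) t)
    (hdψ : ∀ t, HasDerivAt ψ (u t) t) (t : ℝ) :
    HasDerivAt (deriv r) (sin (ψ t - θ t) ^ 2 / r t - u t * sin (ψ t - θ t)) t := by
  have hderiv : deriv r = fun s => cos (ψ s - θ s) := funext fun s => (hdr s).deriv
  have hangle : HasDerivAt (fun s => ψ s - θ s) (u t - sin (ψ t - θ t) / r t) t :=
    (hdψ t).sub (hdθ t)
  rw [hderiv]
  convert hangle.cos using 1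
  ring

theorem bearing_only_maximises_range_acceleration_stationary_general
    (r θ ψ u : ℝ → ℝ)
    (hdr : ∀ t, HasDerivAt r (Real.cos (ψ t - θ t)) t)
    (hdθ : ∀ t, HasDerivAt θ (Real.sin (ψ t - θ t) / r t) t)
    (hdψ : ∀ t, HasDerivAt ψ (u t) t) :
    (∀ t, HasDerivAt (deriv r)
        (Real.sin (ψ t - θ t) ^ 2 / r t - u t * Real.sin (ψ t - θ t)) t) ∧
    (∀ t, u t ∈ Set.Icc (-1 : ℝ) 1 →
        deriv (deriv r) t ≤ Real.sin (ψ t - θ t) ^ 2 / r t + |Real.sin (ψ t - θ t)|) ∧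
    (∀ t, u t = -Real.sign (Real.sin (ψ t - θ t)) →
        deriv (deriv r) t = Real.sin (ψ t - θ t) ^ 2 / r t + |Real.sin (ψ t - θ t)|) := by
  have hr₂ := hasDerivAt_deriv_range_of_polar_kinematics hdr hdθ hdψ
  refine ⟨hr₂, fun t hu => ?_, fun t hu => ?_⟩
  · rw [(hr₂ t).deriv, sub_eq_add_neg]
    exact add_le_add_right (neg_mul_le_abs_of_mem_Icc hu _) _
  · rw [(hr₂ t).deriv, sub_eq_add_neg, neg_mul_eq_abs_of_eq_neg_sign hu]

/-- **Proposition 1 (stationary hazard).**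
An aircraft moves at unit speed with heading `ψ` and turn-rate control `u`; a hazard is
stationary at the origin.  In polar coordinates centred at the hazard
(`r` = range, `θ` = bearing of the aircraft from the hazard) the kinematics are
`ṙ = cos (ψ - θ)`, `θ̇ = sin (ψ - θ) / r`, `ψ̇ = u`.
Then `r̈ = sin² (ψ - θ) / r - u · sin (ψ - θ)`; for every `u t ∈ [-1, 1]` we have
`r̈ ≤ sin² (ψ - θ) / r + |sin (ψ - θ)|`, with equality for the bearing-only strategy
`u = -sign (sin (ψ - θ))`. -/
theorem bearing_only_maximises_range_acceleration_stationary
    (r θ ψ u : ℝ → ℝ)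
    (hr : ∀ t, 0 < r t)
    (hdr : ∀ t, HasDerivAt r (Real.cos (ψ t - θ t)) t)
    (hdθ : ∀ t, HasDerivAt θ (Real.sin (ψ t - θ t) / r t) t)
    (hdψ : ∀ t, HasDerivAt ψ (u t) t) :
    (∀ t, HasDerivAt (deriv r)
        (Real.sin (ψ t - θ t) ^ 2 / r t - u t * Real.sin (ψ t - θ t)) t) ∧
    (∀ t, u t ∈ Set.Icc (-1 : ℝ) 1 →
        deriv (deriv r) t ≤ Real.sin (ψ t - θ t) ^ 2 / r t + |Real.sin (ψ t - θ t)|) ∧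
    (∀ t, u t = -Real.sign (Real.sin (ψ t - θ t)) →
        deriv (deriv r) t = Real.sin (ψ t - θ t) ^ 2 / r t + |Real.sin (ψ t - θ t)|) :=
  bearing_only_maximises_range_acceleration_stationary_general r θ ψ u hdr hdθ hdψ
end

section
/- Let v_h ≥ 0 and ω_h ≥ 0 be constants, and let r, θ, ψ : ℝ → ℝ be differentiable with r(t) > 0 for all t, satisfying the relative planar kinematics ṙ(t) = −cos θ(t) + v_h cos(ψ(t) − θ(t)), θ̇(t) = −u_a(t) + [sin θ(t) + v_h sin(ψ(t) − θ(t))]/r(t), and ψ̇(t) = −u_a(t) + ω_h·ǔ_h(t), where u_a : ℝ → ℝ is the aircraft control and ǔ_h : ℝ → ℝ is the hazard's turn-direction control. Then r is twice differentiable with r̈(t) = −u_a(t)·sin θ(t) + [sin θ(t) + v_h sin(ψ(t) − θ(t))]²/r(t) − v_h·ω_h·ǔ_h(t)·sin(ψ(t) − θ(t)). Consequently, for every t with u_a(t) ∈ [−1, 1], r̈(t) ≤ |sin θ(t)| + [sin θ(t) + v_h sin(ψ(t) − θ(t))]²/r(t) − v_h·ω_h·ǔ_h(t)·sin(ψ(t)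 − θ(t)), and equality holds when u_a(t) = −sign(sin θ(t)). In other words, regardless of the hazard's control ǔ_h, the bearing-only strategy u_a(t) = −sign(sin θ(t)) maximises the instantaneous range acceleration r̈(t) over all aircraft controls u_a(t) ∈ [−1, 1]. -/
/-! Differentiating `ṙ = -cos θ + v_h cos (ψ - θ)` along the kinematics, the terms in `u_a` coming
from `θ̇` and `ψ̇` cancel inside `ψ - θ`, so `r̈` depends on the aircraft control only through
`-u_a sin θ`. Over `u_a ∈ [-1, 1]` this is at most `|sin θ|`, attained at `u_a = -sign (sin θ)`. -/

open Real

lemma Real.sign_mul_self_s1 (s : ℝ) : sign s * s = |s| := by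
  rcases lt_trichotomy s 0 with hs | rfl | hs
  · rw [sign_of_neg hs, abs_of_neg hs, neg_one_mul]
  · simp
  · rw [sign_of_pos hs, abs_of_pos hs, one_mul]

lemma neg_mul_le_abs_of_mem_Icc_s1 {R : Type*} [Ring R] [LinearOrder R] [IsStrictOrderedRing R]
    {u : R} (hu : u ∈ Set.Icc (-1) 1) (s : R) : -u * s ≤ |s| :=
  calc -u * s ≤ |-u * s| := le_abs_self _
    _ = |u| * |s| := by rw [abs_mul, abs_neg]
    _ ≤ |s| := mul_le_of_le_one_left (abs_nonneg s) (abs_le.mpr hu)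

lemma hasDerivAt_neg_cos_add_mul_cos_sub {θ ψ : ℝ → ℝ} {θ' ψ' t : ℝ}
    (hθ : HasDerivAt θ θ' t) (hψ : HasDerivAt ψ ψ' t) (v : ℝ) :
    HasDerivAt (fun t => -cos (θ t) + v * cos (ψ t - θ t))
      (sin (θ t) * θ' - v * sin (ψ t - θ t) * (ψ' - θ')) t :=
  (hθ.cos.fun_neg.fun_add ((hψ.fun_sub hθ).cos.const_mul v)).congr_deriv (by ring)

theorem hasDerivAt_deriv_range {v_h ω_h t : ℝ} {r θ ψ u_a uh : ℝ → ℝ}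
    (hdr : ∀ t, HasDerivAt r (-cos (θ t) + v_h * cos (ψ t - θ t)) t)
    (hdθ : HasDerivAt θ (-u_a t + (sin (θ t) + v_h * sin (ψ t - θ t)) / r t) t)
    (hdψ : HasDerivAt ψ (-u_a t + ω_h * uh t) t) (hr : r t ≠ 0) :
    HasDerivAt (deriv r)
      (-u_a t * sin (θ t) + (sin (θ t) + v_h * sin (ψ t - θ t)) ^ 2 / r t
        - v_h * ω_h * uh t * sin (ψ t - θ t)) t := by
  have hderiv : deriv r = fun t => -cos (θ t) + v_h * cos (ψ t - θ t) :=
    funext fun t => (hdr t).deriv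
  rw [hderiv]
  convert hasDerivAt_neg_cos_add_mul_cos_sub hdθ hdψ v_h using 1
  field_simp
  ring

theorem bearing_only_maximises_range_acceleration_finite_turn_rate_general
    (v_h ω_h : ℝ)
    (r θ ψ u_a uh : ℝ → ℝ)
    (hr : ∀ t, 0 < r t)
    (hdr : ∀ t, HasDerivAt r (-Real.cos (θ t) + v_h * Real.cos (ψ t - θ t)) t)
    (hdθ : ∀ t, HasDerivAt θ
        (-u_a t + (Real.sin (θ t) + v_h * Real.sin (ψ t - θ t)) / r t) t)
    (hdψ : ∀ t, HasDerivAt ψ (-u_a t + ω_h * uh t) t) :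
    (∀ t, HasDerivAt (deriv r)
        (-u_a t * Real.sin (θ t)
          + (Real.sin (θ t) + v_h * Real.sin (ψ t - θ t)) ^ 2 / r t
          - v_h * ω_h * uh t * Real.sin (ψ t - θ t)) t) ∧
    (∀ t, u_a t ∈ Set.Icc (-1 : ℝ) 1 →
        deriv (deriv r) t ≤ |Real.sin (θ t)|
          + (Real.sin (θ t) + v_h * Real.sin (ψ t - θ t)) ^ 2 / r t
          - v_h * ω_h * uh t * Real.sin (ψ t - θ t)) ∧
    (∀ t, u_a t = -Real.sign (Real.sin (θ t)) →
        deriv (deriv r) t = |Real.sin (θ t)|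
          + (Real.sin (θ t) + v_h * Real.sin (ψ t - θ t)) ^ 2 / r t
          - v_h * ω_h * uh t * Real.sin (ψ t - θ t)) := by
  have key t := hasDerivAt_deriv_range hdr (hdθ t) (hdψ t) (hr t).ne'
  refine ⟨key, fun t hu => ?_, fun t hu => ?_⟩
  · rw [(key t).deriv]
    gcongr
    exact neg_mul_le_abs_of_mem_Icc_s1 hu _
  · rw [(key t).deriv, hu, neg_neg, sign_mul_self_s1]

/-- **Proposition 2 (hazard with finite turn rate).**
In the frame attached to the unit-speed aircraft (normalised maximum turn rate 1), the
relative kinematics with a hazard of speed `v_h ≥ 0` and maximum turn rate `ω_h ≥ 0` are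
`ṙ = -cos θ + v_h cos (ψ - θ)`,
`θ̇ = -u_a + (sin θ + v_h sin (ψ - θ)) / r`,
`ψ̇ = -u_a + ω_h · ǔ_h`.
Then `r̈ = -u_a sin θ + (sin θ + v_h sin (ψ - θ))² / r - v_h ω_h ǔ_h sin (ψ - θ)`;
for every `u_a t ∈ [-1, 1]` the range acceleration is at most
`|sin θ| + (sin θ + v_h sin (ψ - θ))² / r - v_h ω_h ǔ_h sin (ψ - θ)`, with equality for the
bearing-only strategy `u_a = -sign (sin θ)`. -/
theorem bearing_only_maximises_range_acceleration_finite_turn_rate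
    (v_h ω_h : ℝ) (hvh : 0 ≤ v_h) (hωh : 0 ≤ ω_h)
    (r θ ψ u_a uh : ℝ → ℝ)
    (hr : ∀ t, 0 < r t)
    (hdr : ∀ t, HasDerivAt r (-Real.cos (θ t) + v_h * Real.cos (ψ t - θ t)) t)
    (hdθ : ∀ t, HasDerivAt θ
        (-u_a t + (Real.sin (θ t) + v_h * Real.sin (ψ t - θ t)) / r t) t)
    (hdψ : ∀ t, HasDerivAt ψ (-u_a t + ω_h * uh t) t) :
    (∀ t, HasDerivAt (deriv r)
        (-u_a t * Real.sin (θ t)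
          + (Real.sin (θ t) + v_h * Real.sin (ψ t - θ t)) ^ 2 / r t
          - v_h * ω_h * uh t * Real.sin (ψ t - θ t)) t) ∧
    (∀ t, u_a t ∈ Set.Icc (-1 : ℝ) 1 →
        deriv (deriv r) t ≤ |Real.sin (θ t)|
          + (Real.sin (θ t) + v_h * Real.sin (ψ t - θ t)) ^ 2 / r t
          - v_h * ω_h * uh t * Real.sin (ψ t - θ t)) ∧
    (∀ t, u_a t = -Real.sign (Real.sin (θ t)) →
        deriv (deriv r) t = |Real.sin (θ t)|
          + (Real.sin (θ t) + v_h * Real.sin (ψ t - θ t)) ^ 2 / r t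
          - v_h * ω_h * uh t * Real.sin (ψ t - θ t)) :=
  bearing_only_maximises_range_acceleration_finite_turn_rate_general v_h ω_h r θ ψ u_a uh hr hdr hdθ
    hdψ
end

section
/- Let u ∈ {−1, 1} and let x̃, ỹ, ũ, v_h ∈ ℝ be constants. Define x, y : ℝ → ℝ by x(τ) = u·(1 − cos τ) + x̃·cos τ + u·ỹ·sin τ − v_h·τ·sin(ũ + u·τ) and y(τ) = (1 − u·x̃)·sin τ + ỹ·cos τ − v_h·τ·cos(ũ + u·τ). Then x(0) = x̃, y(0) = ỹ, and for all τ, x′(τ) = u·y(τ) − v_h·sin(ũ + u·τ) and y′(τ) = 1 − u·x(τ) − v_h·cos(ũ + u·τ). -/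
/-!
The trajectory splits into a free rotation and a resonant forced term. The free part
`(u (1 - cos τ) + x̃ cos τ + u ỹ sin τ, (1 - u x̃) sin τ + ỹ cos τ)` solves the unforced
system `x' = u y, y' = 1 - u x`, which for `u² = 1` is a unit-speed rotation about `(u, 0)`.
Because the hazard heading `ũ + u τ` turns at the same unit rate, the forcing
`-v_h (sin, cos)(ũ + u τ)` is resonant and is answered by the secular term
`-v_h τ (sin, cos)(ũ + u τ)`.
-/

open Real

section ForcedTerm

variable (v c a τ : ℝ)

theorem hasDerivAt_mul_sin_linear :
    HasDerivAt (fun t => v * t * sin (c + a * t))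
      (v * sin (c + a * τ) + a * (v * τ * cos (c + a * τ))) τ := by
  have hphase : HasDerivAt (fun t => c + a * t) a τ := by
    simpa using ((hasDerivAt_id τ).const_mul a).const_add c
  exact (((hasDerivAt_id τ).const_mul v).mul ((hasDerivAt_sin _).comp τ hphase)).congr_deriv
    (by simp only [id, Function.comp_apply]; ring)

theorem hasDerivAt_mul_cos_linear :
    HasDerivAt (fun t => v * t * cos (c + a * t))
      (v * cos (c + a * τ) - a * (v * τ * sin (c + a * τ))) τ := by
  have hphase : HasDerivAt (fun t => c + a * t) a τ := by
    simpa using ((hasDerivAt_id τ).const_mul a).const_add c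
  exact (((hasDerivAt_id τ).const_mul v).mul ((hasDerivAt_cos _).comp τ hphase)).congr_deriv
    (by simp only [id, Function.comp_apply]; ring)

end ForcedTerm

section FreeRotation

variable {u : ℝ} (x₀ y₀ τ : ℝ)

theorem hasDerivAt_free_x (hu : u * u = 1) :
    HasDerivAt (fun t => u * (1 - cos t) + x₀ * cos t + u * y₀ * sin t)
      (u * ((1 - u * x₀) * sin τ + y₀ * cos τ)) τ := by
  refine (((((hasDerivAt_cos τ).const_sub 1).const_mul u).add
    ((hasDerivAt_cos τ).const_mul x₀)).add
      ((hasDerivAt_sin τ).const_mul (u * y₀))).congr_deriv ?_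
  linear_combination (x₀ * sin τ) * hu

theorem hasDerivAt_free_y (hu : u * u = 1) :
    HasDerivAt (fun t => (1 - u * x₀) * sin t + y₀ * cos t)
      (1 - u * (u * (1 - cos τ) + x₀ * cos τ + u * y₀ * sin τ)) τ := by
  refine (((hasDerivAt_sin τ).const_mul (1 - u * x₀)).add
    ((hasDerivAt_cos τ).const_mul y₀)).congr_deriv ?_
  linear_combination (1 - cos τ + y₀ * sin τ) * hu

end FreeRotation

/-- **Closed-form optimal trajectories in regular regions (paper's (19)).**
With constant aircraft control `u = ±1`, constants `x̃, ỹ, ũ, v_h`, the functions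
`x τ = u(1 - cos τ) + x̃ cos τ + u ỹ sin τ - v_h τ sin (ũ + u τ)` and
`y τ = (1 - u x̃) sin τ + ỹ cos τ - v_h τ cos (ũ + u τ)` satisfy `x 0 = x̃`, `y 0 = ỹ`,
`x' τ = u · y τ - v_h sin (ũ + u τ)` and `y' τ = 1 - u · x τ - v_h cos (ũ + u τ)`. -/
theorem optimal_trajectories_regular_region
    (u : ℝ) (hu : u = -1 ∨ u = 1) (x₀ y₀ u₀ v_h : ℝ)
    (x y : ℝ → ℝ)
    (hx : ∀ τ, x τ = u * (1 - Real.cos τ) + x₀ * Real.cos τ + u * y₀ * Real.sin τ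
        - v_h * τ * Real.sin (u₀ + u * τ))
    (hy : ∀ τ, y τ = (1 - u * x₀) * Real.sin τ + y₀ * Real.cos τ
        - v_h * τ * Real.cos (u₀ + u * τ)) :
    x 0 = x₀ ∧ y 0 = y₀ ∧
    (∀ τ, HasDerivAt x (u * y τ - v_h * Real.sin (u₀ + u * τ)) τ) ∧
    (∀ τ, HasDerivAt y (1 - u * x τ - v_h * Real.cos (u₀ + u * τ)) τ) := by
  have hu2 : u * u = 1 := by rcases hu with rfl | rfl <;> norm_num
  obtain rfl : x = _ := funext hx
  obtain rfl : y = _ := funext hy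
  refine ⟨by simp, by simp, fun τ => ?_, fun τ => ?_⟩
  · exact ((hasDerivAt_free_x x₀ y₀ τ hu2).sub
      (hasDerivAt_mul_sin_linear v_h u₀ u τ)).congr_deriv (by ring)
  · exact ((hasDerivAt_free_y x₀ y₀ τ hu2).sub
      (hasDerivAt_mul_cos_linear v_h u₀ u τ)).congr_deriv (by ring)
end

section
/- Let μ > 0 and u_h, x, y, v_h, V_x, V_y ∈ ℝ with V_x = −μ·sin u_h and V_y = −μ·cos u_h. Suppose the switching function vanishes, V_y·x − V_x·y = 0, and its derivative vanishes, V_x·(v_h·cos u_h − 1) − V_y·v_h·sin u_h = 0. Then x = 0. -/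
/-! With `(V_x, V_y) = -μ (sin u_h, cos u_h)`, the derivative of the switching function collapses
to `μ sin u_h`, so a singular arc forces `sin u_h = 0` and hence `cos u_h = ±1`. The switching
function itself then reduces to `-μ cos u_h · x`, which vanishes only for `x = 0`. -/

open Real

theorem Real.cos_ne_zero_of_sin_eq_zero {u : ℝ} (h : sin u = 0) : cos u ≠ 0 := by
  rcases sin_eq_zero_iff_cos_eq.1 h with h | h <;> simp [h]

theorem switching_deriv_eq_mul_sin (μ u v : ℝ) :
    (-μ * sin u) * (v * cos u - 1) - (-μ * cos u) * (v * sin u) = μ * sin u := by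
  ring

theorem switching_eq_of_sin_eq_zero {μ u : ℝ} (h : sin u = 0) (x y : ℝ) :
    (-μ * cos u) * x - (-μ * sin u) * y = -μ * cos u * x := by
  rw [h]
  ring

/-- **The only singular arc is the line `x = 0` (paper's (25)–(28)).**
If `V_x = -μ sin u_h`, `V_y = -μ cos u_h` with `μ > 0`, and both the switching function
`σ = V_y x - V_x y` and its derivative `V_x (v_h cos u_h - 1) - V_y v_h sin u_h` vanish,
then `x = 0`. -/
theorem singular_arc_only_on_y_axis
    (μ u_h x y v_h Vx Vy : ℝ) (hμ : 0 < μ)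
    (hVx : Vx = -μ * Real.sin u_h) (hVy : Vy = -μ * Real.cos u_h)
    (hσ : Vy * x - Vx * y = 0)
    (hσ' : Vx * (v_h * Real.cos u_h - 1) - Vy * (v_h * Real.sin u_h) = 0) :
    x = 0 := by
  subst hVx hVy
  have hsin : sin u_h = 0 := by
    rw [switching_deriv_eq_mul_sin] at hσ'
    exact (mul_eq_zero.1 hσ').resolve_left hμ.ne'
  rw [switching_eq_of_sin_eq_zero hsin] at hσ
  have hcoef : -μ * cos u_h ≠ 0 :=
    mul_ne_zero (neg_ne_zero.2 hμ.ne') (cos_ne_zero_of_sin_eq_zero hsin)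
  exact (mul_eq_zero.1 hσ).resolve_left hcoef
end

section
/- Let v_h ∈ ℝ be a constant and let V_x, V_y, x, y, u_a, u_h : ℝ → ℝ with V_x, V_y, x, y differentiable, satisfying V_x′ = −u_a·V_y, V_y′ = u_a·V_x, x′ = −u_a·y + v_h·sin u_h, and y′ = −1 + u_a·x + v_h·cos u_h. Then the switching function σ := V_y·x − V_x·y is differentiable with σ′(t) = V_x(t)·(1 − v_h·cos u_h(t)) + V_y(t)·v_h·sin u_h(t). In particular, at a time t where V_x(t) = sin θ, V_y(t) = cos θ and u_h(t) = θ + π for some θ ∈ ℝ, one has σ′(t) = sin θ. -/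
/-! σ is the cross product of the costate `(V_x, V_y)` with the relative position `(x, y)`.
Both vectors are turned at the same rate `u_a`, so the turning terms cancel in `σ'` and only
the drift `(v_h sin u_h, -1 + v_h cos u_h)` of the position contributes. -/

open Real

lemma hasDerivAt_switching_function {Vx Vy x y : ℝ → ℝ} {t ω vx vy : ℝ}
    (hVx : HasDerivAt Vx (-ω * Vy t) t) (hVy : HasDerivAt Vy (ω * Vx t) t)
    (hx : HasDerivAt x (-ω * y t + vx) t) (hy : HasDerivAt y (-1 + ω * x t + vy) t) :
    HasDerivAt (fun s => Vy s * x s - Vx s * y s) (Vx t * (1 - vy) + Vy t * vx) t :=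
  ((hVy.mul hx).sub (hVx.mul hy)).congr_deriv (by ring)

lemma sin_mul_one_sub_cos_add_pi_add_cos_mul_sin_add_pi (v θ : ℝ) :
    sin θ * (1 - v * cos (θ + π)) + cos θ * v * sin (θ + π) = sin θ := by
  rw [cos_add_pi, sin_add_pi]
  ring

/-- **Derivative of the switching function (paper's (26) and (30)).**
With `V_x' = -u_a V_y`, `V_y' = u_a V_x`, `x' = -u_a y + v_h sin u_h`,
`y' = -1 + u_a x + v_h cos u_h`, the switching function `σ = V_y x - V_x y` satisfies
`σ' = V_x (1 - v_h cos u_h) + V_y v_h sin u_h`.  In particular, at a time where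
`V_x = sin θ`, `V_y = cos θ` and `u_h = θ + π`, one has `σ' = sin θ`. -/
theorem switching_function_derivative
    (v_h : ℝ) (Vx Vy x y u_a u_h : ℝ → ℝ)
    (hVx : ∀ t, HasDerivAt Vx (-u_a t * Vy t) t)
    (hVy : ∀ t, HasDerivAt Vy (u_a t * Vx t) t)
    (hx : ∀ t, HasDerivAt x (-u_a t * y t + v_h * Real.sin (u_h t)) t)
    (hy : ∀ t, HasDerivAt y (-1 + u_a t * x t + v_h * Real.cos (u_h t)) t) :
    (∀ t, HasDerivAt (fun s => Vy s * x s - Vx s * y s)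
        (Vx t * (1 - v_h * Real.cos (u_h t)) + Vy t * v_h * Real.sin (u_h t)) t) ∧
    (∀ t θ, Vx t = Real.sin θ → Vy t = Real.cos θ → u_h t = θ + Real.pi →
        deriv (fun s => Vy s * x s - Vx s * y s) t = Real.sin θ) := by
  have hσ : ∀ t, HasDerivAt (fun s => Vy s * x s - Vx s * y s)
      (Vx t * (1 - v_h * cos (u_h t)) + Vy t * v_h * sin (u_h t)) t := fun t =>
    (hasDerivAt_switching_function (hVx t) (hVy t) (hx t) (hy t)).congr_deriv (by ring)
  refine ⟨hσ, fun t θ hVxθ hVyθ hu_h => ?_⟩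
  rw [(hσ t).deriv, hVxθ, hVyθ, hu_h]
  exact sin_mul_one_sub_cos_add_pi_add_cos_mul_sin_add_pi v_h θ
end

section
/- Let R, V_a, V_h, W : ℝ → ℝ³ (with the standard Euclidean inner product, norm, and cross product ×), with R and V_a differentiable, R′(t) = V_h(t) − V_a(t), V_a′(t) = W(t) × V_a(t), R(t) ≠ 0 and V_a(t) ≠ 0 for all t. Write r(t) = ‖R(t)‖, v_a = ‖V_a(t)‖ (constant by the normal-acceleration dynamics), v_h(t) = ‖V_h(t)‖, and let θ(t), φ(t), ψ(t) be the undirected angles between V_a(t) and R(t), between V_h(t) and R(t), and between V_a(t) and V_h(t), respectively. Then at every time t with sin θ(t) ≠ 0, θ is differentiable and θ̇(t) = (1/(r(t)·sin θ(t)))·[v_a·sin²θ(t) + v_h(t)·(cos φ(t)·cos θ(t) − cos ψ(t))] − (1/sin θ(t))·⟨W(t), (V_a(t)/‖V_a(t)‖) × (R(t)/‖R(t)‖)⟩. -/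
/-- The three-dimensional cross product on `EuclideanSpace ℝ (Fin 3)`. -/
noncomputable def cross3 (a b : EuclideanSpace ℝ (Fin 3)) : EuclideanSpace ℝ (Fin 3) :=
  (WithLp.equiv 2 (Fin 3 → ℝ)).symm
    ![a 1 * b 2 - a 2 * b 1, a 2 * b 0 - a 0 * b 2, a 0 * b 1 - a 1 * b 0]

/-!
Since `cos θ = ⟪V_a, R⟫ / (‖V_a‖ ‖R‖)`, differentiating this quotient and composing with `arccos`
gives `θ̇ = -(d/dt cos θ) / sin θ`. The turn rate `W` enters only through the triple product
`⟪W × V_a, R⟫ = ⟪W, V_a × R⟫`, and it leaves `‖V_a‖` constant because `⟪V_a, W × V_a⟫ = 0`.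
-/

open scoped RealInnerProductSpace Matrix
open InnerProductGeometry Real

section Cross3

theorem cross3_eq_crossProduct (a b : EuclideanSpace ℝ (Fin 3)) :
    cross3 a b = WithLp.toLp 2 (WithLp.ofLp a ⨯₃ WithLp.ofLp b) := rfl

theorem EuclideanSpace.real_inner_eq_dotProduct {ι : Type*} [Fintype ι]
    (x y : EuclideanSpace ℝ ι) :
    ⟪x, y⟫ = WithLp.ofLp x ⬝ᵥ WithLp.ofLp y := by
  rw [EuclideanSpace.inner_eq_star_dotProduct, star_trivial, dotProduct_comm]

theorem inner_cross3_self (w a : EuclideanSpace ℝ (Fin 3)) : ⟪a, cross3 w a⟫ = 0 := by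
  rw [EuclideanSpace.real_inner_eq_dotProduct, cross3_eq_crossProduct]
  exact dot_cross_self _ _

theorem cross3_inner_eq_inner_cross3 (w a b : EuclideanSpace ℝ (Fin 3)) :
    ⟪cross3 w a, b⟫ = ⟪w, cross3 a b⟫ := by
  rw [real_inner_comm, EuclideanSpace.real_inner_eq_dotProduct,
    EuclideanSpace.real_inner_eq_dotProduct, cross3_eq_crossProduct, cross3_eq_crossProduct,
    triple_product_permutation, triple_product_permutation]

theorem cross3_smul_smul (c d : ℝ) (a b : EuclideanSpace ℝ (Fin 3)) :
    cross3 (c • a) (d • b) = (c * d) • cross3 a b := by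
  simp only [cross3_eq_crossProduct, WithLp.ofLp_smul, map_smul, LinearMap.smul_apply,
    smul_smul, mul_comm c d, WithLp.toLp_smul]

end Cross3

section Angle

variable {E : Type*} [NormedAddCommGroup E] [InnerProductSpace ℝ E] {f g : ℝ → E} {f' g' : E}
  {t : ℝ}

theorem HasDerivAt.norm (hf : HasDerivAt f f' t) (h0 : f t ≠ 0) :
    HasDerivAt (fun s => ‖f s‖) (⟪f t, f'⟫ / ‖f t‖) t := by
  have h := hf.norm_sq.sqrt (pow_ne_zero 2 (norm_ne_zero_iff.2 h0))
  simp only [Real.sqrt_sq (norm_nonneg _)] at h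
  convert h using 1
  field_simp

theorem hasDerivAt_cos_angle (hf : HasDerivAt f f' t) (hg : HasDerivAt g g' t) (hf0 : f t ≠ 0)
    (hg0 : g t ≠ 0) :
    HasDerivAt (fun s => cos (angle (f s) (g s)))
      ((⟪f', g t⟫ + ⟪f t, g'⟫) / (‖f t‖ * ‖g t‖)
        - cos (angle (f t) (g t)) * (⟪f t, f'⟫ / ‖f t‖ ^ 2 + ⟪g t, g'⟫ / ‖g t‖ ^ 2)) t := by
  simp only [InnerProductGeometry.cos_angle]
  have hnf := norm_ne_zero_iff.2 hf0
  have hng := norm_ne_zero_iff.2 hg0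
  refine ((hf.inner ℝ hg).div ((hf.norm hf0).mul (hg.norm hg0)) (mul_ne_zero hnf hng)).congr_deriv
    ?_
  simp only [Pi.mul_apply]
  field_simp
  ring

theorem hasDerivAt_angle (hf : HasDerivAt f f' t) (hg : HasDerivAt g g' t) (hf0 : f t ≠ 0)
    (hg0 : g t ≠ 0) (hsin : sin (angle (f t) (g t)) ≠ 0) :
    HasDerivAt (fun s => angle (f s) (g s))
      (-(1 / sin (angle (f t) (g t))) *
        ((⟪f', g t⟫ + ⟪f t, g'⟫) / (‖f t‖ * ‖g t‖)
          - cos (angle (f t) (g t)) * (⟪f t, f'⟫ / ‖f t‖ ^ 2 + ⟪g t, g'⟫ / ‖g t‖ ^ 2))) t := by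
  have hcos := hasDerivAt_cos_angle hf hg hf0 hg0
  obtain ⟨hne_one, hne_neg_one⟩ : cos (angle (f t) (g t)) ≠ 1 ∧ cos (angle (f t) (g t)) ≠ -1 := by
    rwa [Ne, sin_eq_zero_iff_cos_eq, not_or] at hsin
  have h := (hasDerivAt_arccos hne_neg_one hne_one).comp t hcos
  rw [← sin_arccos, arccos_cos (angle_nonneg _ _) (angle_le_pi _ _)] at h
  simpa only [Function.comp_def, arccos_cos (angle_nonneg _ _) (angle_le_pi _ _)] using h

end Angle

/-- **Three-dimensional bearing dynamics (paper's equation (5)).**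
With `Ṙ = V_h - V_a`, `V̇_a = W × V_a`, `R ≠ 0`, `V_a ≠ 0`, writing `r = ‖R‖`,
`v_a = ‖V_a‖`, `v_h = ‖V_h‖` and `θ, φ, ψ` for the undirected angles between `V_a` and
`R`, between `V_h` and `R`, and between `V_a` and `V_h`, at every time with `sin θ ≠ 0`
the bearing `θ` is differentiable with
`θ̇ = (1/(r sin θ)) (v_a sin² θ + v_h (cos φ cos θ - cos ψ))
      - (1/sin θ) ⟨W, e_{V_a} × e_R⟩`. -/
theorem bearing_dynamics_three_dimensional
    (R V_a V_h W : ℝ → EuclideanSpace ℝ (Fin 3))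
    (hR : ∀ t, R t ≠ 0) (hVa : ∀ t, V_a t ≠ 0)
    (hdR : ∀ t, HasDerivAt R (V_h t - V_a t) t)
    (hdVa : ∀ t, HasDerivAt V_a (cross3 (W t) (V_a t)) t) :
    ∀ t, Real.sin (InnerProductGeometry.angle (V_a t) (R t)) ≠ 0 →
      HasDerivAt (fun s => InnerProductGeometry.angle (V_a s) (R s))
        ((1 / (‖R t‖ * Real.sin (InnerProductGeometry.angle (V_a t) (R t)))) *
            (‖V_a t‖ * Real.sin (InnerProductGeometry.angle (V_a t) (R t)) ^ 2 +
              ‖V_h t‖ *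
                (Real.cos (InnerProductGeometry.angle (V_h t) (R t)) *
                    Real.cos (InnerProductGeometry.angle (V_a t) (R t)) -
                  Real.cos (InnerProductGeometry.angle (V_a t) (V_h t)))) -
          (1 / Real.sin (InnerProductGeometry.angle (V_a t) (R t))) *
            (inner ℝ (W t) (cross3 (‖V_a t‖⁻¹ • V_a t) (‖R t‖⁻¹ • R t)) : ℝ)) t := by
  intro t hsin
  refine (hasDerivAt_angle (hdVa t) (hdR t) (hVa t) (hR t) hsin).congr_deriv ?_
  have hva := norm_ne_zero_iff.2 (hVa t)
  have hr := norm_ne_zero_iff.2 (hR t)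
  rw [inner_cross3_self, cross3_inner_eq_inner_cross3, cross3_smul_smul, inner_smul_right,
    inner_sub_right, inner_sub_right, real_inner_self_eq_norm_sq, real_inner_comm (V_a t) (R t),
    real_inner_comm (V_h t) (R t),
    ← cos_angle_mul_norm_mul_norm (V_a t) (V_h t), ← cos_angle_mul_norm_mul_norm (V_h t) (R t),
    ← cos_angle_mul_norm_mul_norm (V_a t) (R t), sin_sq]
  field_simp
  ring
end
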